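/- arXiv:2601.01711 — 4 statements merged into one kernel-verified Lean document; each statement's English description precedes it below -/
import Mathlib

section
/- Let N ≥ 1 be an integer, a > -1 and β > 0 real numbers, and s > 0. Set t := 1/(2√s). Then ∫_{(0,∞)^N} ∏_{l=1}^{N} λ_l^a e^{-λ_l - s λ_l^2} ∏_{1 ≤ j < k ≤ N} |λ_k - λ_j|^β dλ = e^{N/(4s)} · s^{-(N(a+1) + β N(N-1)/2)/2} · ∫_{(t,∞)^N} ∏_{l=1}^{N} (μ_l - t)^a e^{-μ_l^2} ∏_{1 ≤ j < k ≤ N} |μ_k - μ_j|^β dμ. -/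
open MeasureTheory Finset

noncomputable section

/-- The positive orthant in `ℝ^N`. -/
def posOrth (N : ℕ) : Set (Fin N → ℝ) := {x | ∀ i, 0 < x i}

lemma pairCount (N : ℕ) :
    2 * (∑ j : Fin N, ∑ k : Fin N, if j < k then 1 else 0) + N = N * N := by
  have h : ∀ j k : Fin N, ((if j < k then 1 else 0) + (if k < j then 1 else 0))
      + (if j = k then 1 else 0) = 1 := by
    intro j k
    rcases lt_trichotomy j k with h | h | h
    · simp [h, h.ne, h.not_gt, asymm h]
    · simp [h]
    · simp [h, h.ne', h.not_gt, asymm h]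
  have big : ∑ j : Fin N, ∑ k : Fin N, (((if j < k then 1 else 0) + (if k < j then 1 else 0))
      + (if j = k then 1 else 0)) = N * N := by
    simp [h]
  simp only [Finset.sum_add_distrib] at big
  rw [Finset.sum_comm (f := fun j k : Fin N => if k < j then 1 else 0)] at big
  simp only [Finset.sum_ite_eq, Finset.mem_univ, if_true, Finset.sum_const, Finset.card_univ,
    Fintype.card_fin, smul_eq_mul, mul_one] at big
  omega

/-- Completing the square: the Laplace transform in the purity variable of
the Laguerre β-ensemble partition function equals a Gaussian β-ensemble integral with a hard
wall at `t = 1/(2√s)`. -/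
theorem stmt3 (N : ℕ) (hN : 1 ≤ N) (a β s : ℝ) (ha : -1 < a) (hβ : 0 < β) (hs : 0 < s)
    (t : ℝ) (ht : t = 1 / (2 * Real.sqrt s)) :
    (∫ lam in posOrth N,
        (∏ l, lam l ^ a * Real.exp (-lam l - s * lam l ^ 2)) *
          ∏ j, ∏ k, if j < k then |lam k - lam j| ^ β else 1) =
      Real.exp ((N : ℝ) / (4 * s)) *
        s ^ (-(((N : ℝ) * (a + 1) + β * N * ((N : ℝ) - 1) / 2) / 2)) *
        ∫ mu in {mu : Fin N → ℝ | ∀ i, t < mu i},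
          (∏ l, (mu l - t) ^ a * Real.exp (-(mu l ^ 2))) *
            ∏ j, ∏ k, if j < k then |mu k - mu j| ^ β else 1 := by
  have hc : (0:ℝ) < Real.sqrt s := Real.sqrt_pos.2 hs
  set c := Real.sqrt s with hcdef
  have hcs : c * c = s := Real.mul_self_sqrt hs.le
  have ht2 : 2 * c * t = 1 := by rw [ht]; field_simp
  have htt : t * t = 1 / (4 * s) := by
    rw [ht, div_mul_div_comm, one_mul]
    congr 1
    nlinarith [hcs]
  set F : (Fin N → ℝ) → ℝ := fun lam =>
    (∏ l, lam l ^ a * Real.exp (-lam l - s * lam l ^ 2)) *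
      ∏ j, ∏ k, if j < k then |lam k - lam j| ^ β else 1 with hF
  set G : (Fin N → ℝ) → ℝ := fun mu =>
    (∏ l, (mu l - t) ^ a * Real.exp (-(mu l ^ 2))) *
      ∏ j, ∏ k, if j < k then |mu k - mu j| ^ β else 1 with hG
  set S2 : Set (Fin N → ℝ) := {mu : Fin N → ℝ | ∀ i, t < mu i} with hS2
  have hm1 : MeasurableSet (posOrth N) := by
    have : posOrth N = Set.univ.pi fun _ : Fin N => Set.Ioi (0:ℝ) := by
      ext x; simp [posOrth]
    rw [this]; exact MeasurableSet.univ_pi fun _ => measurableSet_Ioi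
  have hm2 : MeasurableSet S2 := by
    have : S2 = Set.univ.pi fun _ : Fin N => Set.Ioi t := by
      ext x; simp [hS2]
    rw [this]; exact MeasurableSet.univ_pi fun _ => measurableSet_Ioi
  set m : ℕ := ∑ j : Fin N, ∑ k : Fin N, if j < k then 1 else 0 with hm
  have hmr : (m : ℝ) = (N : ℝ) * ((N : ℝ) - 1) / 2 := by
    have h2 : 2 * (m : ℝ) + (N : ℝ) = (N : ℝ) * (N : ℝ) := by
      exact_mod_cast congrArg (Nat.cast : ℕ → ℝ) (pairCount N)
    linarith
  set C : ℝ := c ^ ((N:ℝ) * a) * Real.exp (-((N:ℝ) / (4 * s))) *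
    c ^ (β * ((N : ℝ) * ((N : ℝ) - 1) / 2)) with hC
  have key : ∀ x : Fin N → ℝ,
      S2.indicator G (c • x + fun _ => t) = C * (posOrth N).indicator F x := by
    intro x
    by_cases hx : x ∈ posOrth N
    · have hmem : (c • x + fun _ => t) ∈ S2 := by
        intro i
        simp only [Pi.add_apply, Pi.smul_apply, smul_eq_mul]
        nlinarith [hx i]
      rw [Set.indicator_of_mem hx, Set.indicator_of_mem hmem]
      simp only [hG, hF, Pi.add_apply, Pi.smul_apply, smul_eq_mul]
      have e1 : (∏ l, (c * x l + t - t) ^ a * Real.exp (-((c * x l + t) ^ 2))) =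
          (c ^ a * Real.exp (-(1 / (4 * s)))) ^ N *
            ∏ l, x l ^ a * Real.exp (-x l - s * x l ^ 2) := by
        calc (∏ l, (c * x l + t - t) ^ a * Real.exp (-((c * x l + t) ^ 2)))
            = ∏ l, (c ^ a * Real.exp (-(1 / (4 * s)))) *
                (x l ^ a * Real.exp (-x l - s * x l ^ 2)) := by
              refine Finset.prod_congr rfl fun l _ => ?_
              have hxl : 0 < x l := hx l
              have h1 : c * x l + t - t = c * x l := by ring
              have h2 : -((c * x l + t) ^ 2) = -(1 / (4 * s)) + (-x l - s * x l ^ 2) := by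
                have : (c * x l + t) ^ 2 = s * x l ^ 2 + x l + 1 / (4 * s) := by
                  linear_combination (x l) ^ 2 * hcs + (x l) * ht2 + htt
                rw [this]; ring
              rw [h1, Real.mul_rpow hc.le hxl.le, h2, Real.exp_add]
              ring
          _ = _ := by
              rw [Finset.prod_mul_distrib, Finset.prod_const, Finset.card_univ,
                Fintype.card_fin]
      have e2 : (∏ j, ∏ k, if j < k then |c * x k + t - (c * x j + t)| ^ β else 1) =
          (c ^ β) ^ m * ∏ j, ∏ k, if j < k then |x k - x j| ^ β else 1 := by
        have step : ∀ j k : Fin N, (if j < k then |c * x k + t - (c * x j + t)| ^ β else 1) =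
            ((c ^ β) ^ (if j < k then 1 else 0)) * (if j < k then |x k - x j| ^ β else 1) := by
          intro j k
          by_cases hjk : j < k
          · simp only [hjk, if_true, pow_one]
            have : c * x k + t - (c * x j + t) = c * (x k - x j) := by ring
            rw [this, abs_mul, abs_of_pos hc, Real.mul_rpow hc.le (abs_nonneg _)]
          · simp [hjk]
        simp only [step]
        calc (∏ j, ∏ k, ((c ^ β) ^ (if j < k then 1 else 0)) *
                (if j < k then |x k - x j| ^ β else 1))
            = ∏ j, ((∏ k, (c ^ β) ^ (if j < k then 1 else 0)) *
                ∏ k, (if j < k then |x k - x j| ^ β else 1)) :=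
              Finset.prod_congr rfl fun j _ => Finset.prod_mul_distrib
          _ = (∏ j, ∏ k, (c ^ β) ^ (if j < k then 1 else 0)) *
                ∏ j, ∏ k, (if j < k then |x k - x j| ^ β else 1) :=
              Finset.prod_mul_distrib
          _ = (c ^ β) ^ m * ∏ j, ∏ k, (if j < k then |x k - x j| ^ β else 1) := by
              congr 1
              calc (∏ j, ∏ k, (c ^ β) ^ (if j < k then 1 else 0))
                  = ∏ j : Fin N, (c ^ β) ^ (∑ k : Fin N, if j < k then 1 else 0) :=
                    Finset.prod_congr rfl fun j _ => Finset.prod_pow_eq_pow_sum _ _ _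
                _ = (c ^ β) ^ m := by rw [hm]; exact Finset.prod_pow_eq_pow_sum _ _ _
      rw [e1, e2, hC]
      have hcN : (c ^ a * Real.exp (-(1 / (4 * s)))) ^ N =
          c ^ ((N:ℝ) * a) * Real.exp (-((N:ℝ) / (4 * s))) := by
        rw [mul_pow, ← Real.rpow_natCast (c ^ a) N, ← Real.rpow_mul hc.le,
          ← Real.exp_nat_mul]
        congr 1
        · congr 1; ring
        · congr 1; ring
      have hcm : (c ^ β) ^ m = c ^ (β * ((N : ℝ) * ((N : ℝ) - 1) / 2)) := by
        rw [← Real.rpow_natCast (c ^ β) m, ← Real.rpow_mul hc.le, hmr]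
      rw [hcN, hcm]
      ring
    · have hnmem : (c • x + fun _ => t) ∉ S2 := by
        intro hmem
        apply hx
        intro i
        have := hmem i
        simp only [Pi.add_apply, Pi.smul_apply, smul_eq_mul] at this
        nlinarith
      rw [Set.indicator_of_notMem hx, Set.indicator_of_notMem hnmem, mul_zero]
  have hcN0 : (c : ℝ) ^ N ≠ 0 := pow_ne_zero _ hc.ne'
  have h2 : ∫ x, S2.indicator G (c • x + fun _ => t) =
      (c ^ N)⁻¹ • ∫ y, S2.indicator G (y + fun _ => t) := by
    have := MeasureTheory.Measure.integral_comp_smul_of_nonneg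
      (volume : Measure (Fin N → ℝ))
      (fun y => S2.indicator G (y + fun _ => t)) c (hR := hc.le)
    simpa [Module.finrank_fintype_fun_eq_card] using this
  have h3 : ∫ x, S2.indicator G (c • x + fun _ => t) =
      C * ∫ x, (posOrth N).indicator F x := by
    simp only [key]
    exact integral_const_mul C _
  have cov : ∫ mu in S2, G mu = (c ^ N) * (C * ∫ lam in posOrth N, F lam) := by
    rw [← integral_indicator hm2, ← integral_indicator hm1]
    calc ∫ y, S2.indicator G y
        = ∫ y, S2.indicator G (y + fun _ => t) :=
          (integral_add_right_eq_self (fun y => S2.indicator G y) (fun _ => t)).symm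
      _ = (c ^ N) * ((c ^ N)⁻¹ * ∫ y, S2.indicator G (y + fun _ => t)) := by
          field_simp
      _ = (c ^ N) * ∫ x, S2.indicator G (c • x + fun _ => t) := by
          rw [h2]; simp [smul_eq_mul]
      _ = (c ^ N) * (C * ∫ x, (posOrth N).indicator F x) := by rw [h3]
  have hcp : ∀ X : ℝ, c ^ X = s ^ (X / 2) := by
    intro X
    rw [hcdef, Real.sqrt_eq_rpow, ← Real.rpow_mul hs.le]
    congr 1
    ring
  have hcoef : Real.exp ((N : ℝ) / (4 * s)) *
      s ^ (-(((N : ℝ) * (a + 1) + β * N * ((N : ℝ) - 1) / 2) / 2)) * ((c : ℝ) ^ N * C) = 1 := by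
    have h1 : (c : ℝ) ^ N = s ^ ((N : ℝ) / 2) := by
      rw [← Real.rpow_natCast c N, hcp]
    rw [hC, h1, hcp, hcp]
    calc Real.exp ((N : ℝ) / (4 * s)) *
          s ^ (-(((N : ℝ) * (a + 1) + β * N * ((N : ℝ) - 1) / 2) / 2)) *
          (s ^ ((N : ℝ) / 2) * (s ^ (((N:ℝ) * a) / 2) * Real.exp (-((N:ℝ) / (4 * s))) *
            s ^ ((β * ((N : ℝ) * ((N : ℝ) - 1) / 2)) / 2)))
        = (Real.exp ((N : ℝ) / (4 * s)) * Real.exp (-((N:ℝ) / (4 * s)))) *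
          (s ^ (-(((N : ℝ) * (a + 1) + β * N * ((N : ℝ) - 1) / 2) / 2)) *
            (s ^ ((N : ℝ) / 2) * (s ^ (((N:ℝ) * a) / 2) *
              s ^ ((β * ((N : ℝ) * ((N : ℝ) - 1) / 2)) / 2)))) := by ring
      _ = 1 := by
          rw [← Real.exp_add, ← Real.rpow_add hs, ← Real.rpow_add hs, ← Real.rpow_add hs,
            show (N : ℝ) / (4 * s) + -((N:ℝ) / (4 * s)) = 0 by ring,
            show -(((N : ℝ) * (a + 1) + β * N * ((N : ℝ) - 1) / 2) / 2) +
              ((N : ℝ) / 2 + (((N:ℝ) * a) / 2 + (β * ((N : ℝ) * ((N : ℝ) - 1) / 2)) / 2)) = 0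
              by ring,
            Real.exp_zero, Real.rpow_zero, one_mul]
  rw [cov]
  have hassoc : Real.exp ((N : ℝ) / (4 * s)) *
      s ^ (-(((N : ℝ) * (a + 1) + β * N * ((N : ℝ) - 1) / 2) / 2)) *
      ((c : ℝ) ^ N * (C * ∫ lam in posOrth N, F lam)) =
      (Real.exp ((N : ℝ) / (4 * s)) *
        s ^ (-(((N : ℝ) * (a + 1) + β * N * ((N : ℝ) - 1) / 2) / 2)) *
        ((c : ℝ) ^ N * C)) * ∫ lam in posOrth N, F lam := by ring
  rw [hassoc, hcoef, one_mul]

end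
end

section
/- Let N ≥ 2 be an integer, a > -1 a real number, and p ≥ 0 an integer. Then ⟨Σ_{j=1}^{N} λ_j^p⟩^{fL} = ⟨Σ_{j=1}^{N} λ_j^p⟩^{L} / (N^2 + Na)_p, where (u)_p := u(u+1)⋯(u+p-1) is the rising Pochhammer symbol ((u)_0 := 1). -/
/-!
Write a point of the positive orthant as `x = r • μ` with `r = ∑ xᵢ > 0` and `μ` on the
simplex `∑ μᵢ = 1`, the last coordinate of `μ` being `σ = 1 - μ₁ - ⋯ - μ_{N-1}`. The Jacobian of
`(r, μ₁, …, μ_{N-1}) ↦ r • μ` is `r ^ (N - 1)`, and the LUE weight at `r • μ` is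
`r ^ (N a + N (N - 1)) e^{-r}` times the fixed-trace weight at `μ`. So for `G` homogeneous of
degree `d` the LUE integral of `G` is `Γ(N² + N a + d)` times its fixed-trace integral. Applying
this to `G = ∑ λⱼ ^ p` and to `G = 1`, the two averages differ by the factor
`Γ(N² + N a + p) / Γ(N² + N a) = (N² + N a)_p`.
-/

open MeasureTheory Finset

noncomputable section

/-- The LUE eigenvalue weight: `∏ x_l^a e^{-x_l} ∏_{j<k} (x_k - x_j)^2`. -/
def lueW (N : ℕ) (a : ℝ) (x : Fin N → ℝ) : ℝ :=
  (∏ l, x l ^ a * Real.exp (-x l)) *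
    ∏ j, ∏ k, if j < k then (x k - x j) ^ 2 else 1

/-- The LUE average of a function of the eigenvalues. -/
def lueAvg (N : ℕ) (a : ℝ) (F : (Fin N → ℝ) → ℝ) : ℝ :=
  (∫ x in posOrth N, F x * lueW N a x) / ∫ x in posOrth N, lueW N a x

/-- The open simplex: positive coordinates with sum less than 1. -/
def simplexT (m : ℕ) : Set (Fin m → ℝ) := {x | (∀ i, 0 < x i) ∧ ∑ i, x i < 1}

/-- Extend `N-1` coordinates in the simplex by the final coordinate `σ = 1 - Σ`. -/
def flFull (N : ℕ) (lam : Fin (N - 1) → ℝ) : Fin N → ℝ :=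
  fun i => if h : (i : ℕ) < N - 1 then lam ⟨i, h⟩ else 1 - ∑ j, lam j

/-- The fixed-trace LUE eigenvalue weight: `∏ μ_l^a ∏_{j<k} (μ_k - μ_j)^2`. -/
def flV (N : ℕ) (a : ℝ) (mu : Fin N → ℝ) : ℝ :=
  (∏ l, mu l ^ a) * ∏ j, ∏ k, if j < k then (mu k - mu j) ^ 2 else 1

/-- The fixed-trace LUE average of a function of the eigenvalues. -/
def flAvg (N : ℕ) (a : ℝ) (F : (Fin N → ℝ) → ℝ) : ℝ :=
  (∫ lam in simplexT (N - 1), F (flFull N lam) * flV N a (flFull N lam)) /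
    ∫ lam in simplexT (N - 1), flV N a (flFull N lam)

theorem prod_prod_ite_lt_eq_pow_choose {M : Type*} [CommMonoid M] (n : ℕ) (c : M) :
    ∏ j : Fin n, ∏ k : Fin n, (if j < k then c else 1) = c ^ n.choose 2 := by
  induction n with
  | zero => simp
  | succ n ih =>
    simp only [Fin.prod_univ_succ, Fin.succ_lt_succ_iff, Fin.succ_pos, Fin.not_lt_zero,
      if_true, if_false, Finset.prod_const, Finset.card_univ, Fintype.card_fin, one_mul, ih,
      Nat.choose_succ_succ', Nat.choose_one_right, pow_add]

theorem prod_prod_ite_lt_sub_sq_smul {R : Type*} [CommRing R] (n : ℕ) (r : R) (μ : Fin n → R) :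
    (∏ j, ∏ k, if j < k then ((r • μ) k - (r • μ) j) ^ 2 else 1) =
      (r ^ 2) ^ n.choose 2 * ∏ j, ∏ k, if j < k then (μ k - μ j) ^ 2 else 1 := by
  rw [← prod_prod_ite_lt_eq_pow_choose, ← Finset.prod_mul_distrib]
  refine Finset.prod_congr rfl fun j _ => ?_
  rw [← Finset.prod_mul_distrib]
  refine Finset.prod_congr rfl fun k _ => ?_
  split_ifs
  · simp only [Pi.smul_apply, smul_eq_mul]; ring
  · rw [one_mul]

theorem flV_smul (N : ℕ) (a : ℝ) {r : ℝ} (hr : 0 < r) {μ : Fin N → ℝ} (hμ : ∀ i, 0 ≤ μ i) :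
    flV N a (r • μ) = r ^ ((N : ℝ) * a + N * (N - 1)) * flV N a μ := by
  have hpow : ∏ l, (r • μ) l ^ a = r ^ ((N : ℝ) * a) * ∏ l, μ l ^ a := by
    simp only [Pi.smul_apply, smul_eq_mul, Real.mul_rpow hr.le (hμ _), Finset.prod_mul_distrib,
      Finset.prod_const, Finset.card_univ, Fintype.card_fin, ← Real.rpow_mul_natCast hr.le,
      mul_comm a]
  have hexp : (N : ℝ) * (N - 1) = ((2 * N.choose 2 : ℕ) : ℝ) := by
    push_cast [Nat.cast_choose_two]; ring
  rw [flV, flV, hpow, prod_prod_ite_lt_sub_sq_smul, Real.rpow_add hr, hexp, Real.rpow_natCast,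
    pow_mul]
  ring

theorem lueW_eq_flV_mul_exp (N : ℕ) (a : ℝ) (x : Fin N → ℝ) :
    lueW N a x = flV N a x * Real.exp (-∑ i, x i) := by
  rw [lueW, flV, Finset.prod_mul_distrib, ← Finset.sum_neg_distrib, Real.exp_sum]
  ring

theorem lueW_smul (N : ℕ) (a : ℝ) {r : ℝ} (hr : 0 < r) {μ : Fin N → ℝ} (hμ : ∀ i, 0 ≤ μ i)
    (hsum : ∑ i, μ i = 1) :
    lueW N a (r • μ) = r ^ ((N : ℝ) * a + N * (N - 1)) * Real.exp (-r) * flV N a μ := by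
  rw [lueW_eq_flV_mul_exp, flV_smul N a hr hμ]
  simp only [Pi.smul_apply, smul_eq_mul, ← Finset.mul_sum, hsum, mul_one]
  ring

theorem flFull_eq_snoc (m : ℕ) (lam : Fin m → ℝ) :
    flFull (m + 1) lam = Fin.snoc lam (1 - ∑ j, lam j) := by
  funext i
  simp only [flFull, Fin.snoc, Nat.add_sub_cancel]
  split_ifs <;> rfl

theorem sum_flFull (m : ℕ) (lam : Fin m → ℝ) : ∑ i, flFull (m + 1) lam i = 1 := by
  simp [flFull_eq_snoc, Fin.sum_univ_castSucc]

theorem flFull_pos {m : ℕ} {lam : Fin m → ℝ} (h : lam ∈ simplexT m) (i : Fin (m + 1)) :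
    0 < flFull (m + 1) lam i := by
  rw [flFull_eq_snoc]
  induction i using Fin.lastCases with
  | last => simpa using h.2
  | cast j => simpa using h.1 j

theorem flFull_init (m : ℕ) (y : Fin (m + 1) → ℝ) :
    flFull (m + 1) (Fin.init y) = y + (1 - ∑ i, y i) • Pi.single (Fin.last m) 1 := by
  rw [flFull_eq_snoc]
  funext i
  induction i using Fin.lastCases with
  | last =>
    simp only [Fin.init, Fin.snoc_last, Fin.sum_univ_castSucc, Pi.add_apply, Pi.smul_apply,
      Pi.single_eq_same, smul_eq_mul, mul_one]
    ring
  | cast j => simp [Fin.init, (Fin.castSucc_lt_last j).ne]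

theorem bijOn_smul_flFull (m : ℕ) :
    Set.BijOn (fun z : ℝ × (Fin m → ℝ) => z.1 • flFull (m + 1) z.2)
      (Set.Ioi 0 ×ˢ simplexT m) (posOrth (m + 1)) := by
  refine Set.InvOn.bijOn (f' := fun x => (∑ i, x i, (∑ i, x i)⁻¹ • Fin.init x)) ⟨?_, ?_⟩ ?_ ?_
  · rintro ⟨r, lam⟩ ⟨hr, -⟩
    refine Prod.ext ?_ (funext fun j => ?_)
    · simp [← Finset.mul_sum, sum_flFull]
    · simp [← Finset.mul_sum, flFull_eq_snoc, Fin.init, (Set.mem_Ioi.1 hr).ne']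
  · intro x hx
    have hsum : ∑ i, x i ≠ 0 := (Finset.sum_pos (fun i _ => hx i) Finset.univ_nonempty).ne'
    funext i
    induction i using Fin.lastCases with
    | last =>
      simp only [flFull_eq_snoc, Pi.smul_apply, Fin.init, smul_eq_mul, ← Finset.mul_sum,
        Fin.snoc_last, mul_sub, mul_one, mul_inv_cancel_left₀ hsum]
      rw [Fin.sum_univ_castSucc]
      ring
    | cast j => simp [flFull_eq_snoc, Fin.init, hsum]
  · rintro ⟨r, lam⟩ ⟨hr, hlam⟩ i
    exact mul_pos hr (flFull_pos hlam i)
  · intro x hx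
    have hsum : 0 < ∑ i, x i := Finset.sum_pos (fun i _ => hx i) Finset.univ_nonempty
    refine ⟨hsum, fun j => mul_pos (inv_pos.2 hsum) (hx _), ?_⟩
    simp only [Fin.init, smul_eq_mul, Pi.smul_apply, ← Finset.mul_sum]
    rw [inv_mul_lt_one₀ hsum, Fin.sum_univ_castSucc (f := x)]
    linarith [hx (Fin.last m)]

theorem measurableSet_simplexT (m : ℕ) : MeasurableSet (simplexT m) := by
  unfold simplexT
  measurability

theorem Matrix.det_eq_prod_of_sum_rows_eq_single {R : Type*} [CommRing R] {m : ℕ}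
    (M : Matrix (Fin (m + 1)) (Fin (m + 1)) R)
    (hsum : ∀ k, ∑ i, M i k = if k = Fin.last m then 1 else 0)
    (htri : ∀ (j : Fin m) k, k < j.castSucc → M j.castSucc k = 0) :
    M.det = ∏ j : Fin m, M j.castSucc j.castSucc := by
  have hrows : ∑ i, M i = Pi.single (Fin.last m) 1 :=
    funext fun k => (Finset.sum_apply k _ _).trans (by rw [hsum, Pi.single_apply])
  have hrow := M.det_updateRow_sum (Fin.last m) fun _ => 1
  simp only [one_smul, hrows] at hrow
  have htri' : (M.updateRow (Fin.last m) (Pi.single (Fin.last m) 1)).IsUpperTriangular := by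
    intro i k hki
    induction i using Fin.lastCases with
    | last => simp [show k ≠ Fin.last m from hki.ne]
    | cast j => simpa [(Fin.castSucc_lt_last j).ne] using htri j k hki
  rw [← hrow, Matrix.det_of_isUpperTriangular htri', Fin.prod_univ_castSucc]
  simp [(Fin.castSucc_lt_last _).ne]

/-- The map `(λ, r) ↦ r • flFull (m + 1) λ` (see `coneMap_eq`), in a visibly smooth form. -/
def coneMap (m : ℕ) (y : Fin (m + 1) → ℝ) : Fin (m + 1) → ℝ :=
  y (Fin.last m) • (y + (1 - ∑ i, y i) • (Pi.single (Fin.last m) 1 : Fin (m + 1) → ℝ))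

theorem coneMap_eq (m : ℕ) (y : Fin (m + 1) → ℝ) :
    coneMap m y = y (Fin.last m) • flFull (m + 1) (Fin.init y) := by
  rw [coneMap, flFull_init]

theorem det_fderiv_coneMap (m : ℕ) (y : Fin (m + 1) → ℝ) :
    (fderiv ℝ (coneMap m) y).det = y (Fin.last m) ^ m := by
  have hdsum : HasFDerivAt (fun y : Fin (m + 1) → ℝ => ∑ i, y i)
      (∑ i, ContinuousLinearMap.proj i) y :=
    HasFDerivAt.fun_sum fun i _ => hasFDerivAt_apply (𝕜 := ℝ) i y
  have hD : HasFDerivAt (coneMap m) _ y := (hasFDerivAt_apply (𝕜 := ℝ) (Fin.last m) y).smul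
    ((hasFDerivAt_id y).add
      ((hdsum.const_sub 1).smul_const (Pi.single (Fin.last m) 1 : Fin (m + 1) → ℝ)))
  rw [ContinuousLinearMap.det, ← LinearMap.det_toMatrix']
  set M := LinearMap.toMatrix' (fderiv ℝ (coneMap m) y : (Fin (m + 1) → ℝ) →ₗ[ℝ] Fin (m + 1) → ℝ)
  have hM : ∀ i k, M i k = (if i = k then y (Fin.last m) else 0) +
      (if i = Fin.last m then -y (Fin.last m) else 0) +
      if Fin.last m = k then flFull (m + 1) (Fin.init y) i else 0 := by
    intro i k
    simp [M, hD.fderiv, LinearMap.toMatrix'_apply, flFull_init, Matrix.one_apply, Pi.single_apply,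
      sub_eq_add_neg]
  have hrows : ∀ k, ∑ i, M i k = if k = Fin.last m then 1 else 0 := by
    intro k
    simp [hM, Finset.sum_add_distrib, Finset.sum_ite_irrel, sum_flFull, eq_comm]
  rw [Matrix.det_eq_prod_of_sum_rows_eq_single M hrows]
  · simp [hM, (Fin.castSucc_lt_last _).ne']
  · intro j k hk
    simp [hM, hk.ne', (hk.trans (Fin.castSucc_lt_last j)).ne', (Fin.castSucc_lt_last _).ne]

theorem setIntegral_posOrth_eq_setIntegral_Ioi_prod_simplexT (m : ℕ) (f : (Fin (m + 1) → ℝ) → ℝ) :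
    ∫ x in posOrth (m + 1), f x =
      ∫ z in Set.Ioi 0 ×ˢ simplexT m, z.1 ^ m * f (z.1 • flFull (m + 1) z.2) := by
  let e := MeasurableEquiv.piFinSuccAbove (fun _ : Fin (m + 1) => ℝ) (Fin.last m)
  have he : ∀ y, e y = (y (Fin.last m), Fin.init y) := fun y => by
    simp [e]
  let S := e ⁻¹' (Set.Ioi 0 ×ˢ simplexT m)
  have hS : MeasurableSet S := e.measurable (measurableSet_Ioi.prod (measurableSet_simplexT m))
  have hbij : Set.BijOn (coneMap m) S (posOrth (m + 1)) := by
    have : coneMap m = (fun z : ℝ × (Fin m → ℝ) => z.1 • flFull (m + 1) z.2) ∘ e := by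
      funext y; rw [Function.comp_apply, he, coneMap_eq]
    rw [this]
    exact (bijOn_smul_flFull m).comp e.bijective.bijOn_preimage
  have hdiff : ∀ y, DifferentiableAt ℝ (coneMap m) y := fun y => by
    unfold coneMap; fun_prop
  rw [← hbij.image_eq, integral_image_eq_integral_abs_det_fderiv_smul volume hS
    (fun y _ => (hdiff y).hasFDerivAt.hasFDerivWithinAt) hbij.injOn]
  let g : ℝ × (Fin m → ℝ) → ℝ := fun z => z.1 ^ m * f (z.1 • flFull (m + 1) z.2)
  have hJ : Set.EqOn (fun y => |(fderiv ℝ (coneMap m) y).det| • f (coneMap m y)) (g ∘ e) S := by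
    intro y hy
    have hr : 0 < y (Fin.last m) := by simpa [S, he] using hy.1
    simp only [g, Function.comp_apply, det_fderiv_coneMap, abs_of_pos (pow_pos hr m), coneMap_eq,
      he, smul_eq_mul]
  rw [setIntegral_congr_fun hS hJ]
  exact (volume_preserving_piFinSuccAbove (fun _ : Fin (m + 1) => ℝ) (Fin.last m))
    |>.setIntegral_preimage_emb e.measurableEmbedding g _

theorem Real.Gamma_add_natCast_eq_eval_ascPochhammer_mul {s : ℝ} (hs : 0 < s) (p : ℕ) :
    Real.Gamma (s + p) = (ascPochhammer ℝ p).eval s * Real.Gamma s := by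
  induction p with
  | zero => simp
  | succ p ih =>
    rw [Nat.cast_succ, ← add_assoc, Real.Gamma_add_one (by positivity), ih,
      ascPochhammer_succ_right, Polynomial.eval_mul]
    simp only [Polynomial.eval_add, Polynomial.eval_X, Polynomial.eval_natCast]
    ring

theorem sq_add_mul_pos {N : ℕ} (hN : 0 < N) {a : ℝ} (ha : -1 < a) : 0 < (N : ℝ) ^ 2 + N * a := by
  have hN' : (1 : ℝ) ≤ N := by exact_mod_cast hN
  nlinarith [mul_pos (by linarith : (0 : ℝ) < N) (by linarith : (0 : ℝ) < N + a)]

theorem setIntegral_mul_lueW_of_homogeneous (N : ℕ) (hN : 0 < N) (a : ℝ) (ha : -1 < a)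
    (G : (Fin N → ℝ) → ℝ) (d : ℕ) (hG : ∀ r, 0 < r → ∀ μ, G (r • μ) = r ^ d * G μ) :
    ∫ x in posOrth N, G x * lueW N a x =
      Real.Gamma ((N : ℝ) ^ 2 + N * a + d) *
        ∫ lam in simplexT (N - 1), G (flFull N lam) * flV N a (flFull N lam) := by
  have hs : 0 < (N : ℝ) ^ 2 + N * a + d :=
    add_pos_of_pos_of_nonneg (sq_add_mul_pos hN ha) d.cast_nonneg
  obtain ⟨m, rfl⟩ : ∃ m, N = m + 1 := ⟨N - 1, by omega⟩
  rw [setIntegral_posOrth_eq_setIntegral_Ioi_prod_simplexT, Real.Gamma_eq_integral hs,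
    Measure.volume_eq_prod, ← setIntegral_prod_mul]
  refine setIntegral_congr_fun (measurableSet_Ioi.prod (measurableSet_simplexT m)) ?_
  rintro ⟨r, lam⟩ ⟨hr, hlam⟩
  replace hr : 0 < r := hr
  have hexp : ((m + 1 : ℕ) : ℝ) ^ 2 + (m + 1 : ℕ) * a + d - 1 =
      m + d + ((m + 1 : ℕ) * a + (m + 1 : ℕ) * ((m + 1 : ℕ) - 1)) := by
    push_cast; ring
  dsimp only
  rw [hG r hr, lueW_smul _ a hr (fun i => (flFull_pos hlam i).le) (sum_flFull m lam), hexp,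
    Real.rpow_add hr (m + d), Real.rpow_add hr m, Real.rpow_natCast, Real.rpow_natCast]
  ring

/-- The `p`-th spectral moment of the fixed-trace LUE equals the LUE
moment divided by the rising Pochhammer symbol `(N² + Na)_p`. -/
theorem stmt4 (N : ℕ) (hN : 2 ≤ N) (a : ℝ) (ha : -1 < a) (p : ℕ) :
    flAvg N a (fun lam => ∑ j, lam j ^ p) =
      lueAvg N a (fun lam => ∑ j, lam j ^ p) /
        (ascPochhammer ℝ p).eval ((N : ℝ) ^ 2 + N * a) := by
  have hN₀ : 0 < N := by omega
  have hs := sq_add_mul_pos hN₀ ha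
  have hnum := setIntegral_mul_lueW_of_homogeneous N hN₀ a ha (fun x => ∑ j, x j ^ p) p
    fun r _ μ => by simp [mul_pow, Finset.mul_sum]
  have hden := setIntegral_mul_lueW_of_homogeneous N hN₀ a ha (fun _ => 1) 0 fun r _ μ => by simp
  simp only [one_mul, Nat.cast_zero, add_zero] at hden
  have hΓ := Real.Gamma_pos_of_pos hs
  have hP : 0 < (ascPochhammer ℝ p).eval ((N : ℝ) ^ 2 + N * a) := ascPochhammer_pos p _ hs
  rw [flAvg, lueAvg, hnum, hden, Real.Gamma_add_natCast_eq_eval_ascPochhammer_mul hs, mul_assoc,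
    mul_div_assoc, mul_div_mul_left _ _ hΓ.ne', mul_div_cancel_left₀ _ hP.ne']

end
end

section
/- Let N ≥ 2 be an integer, a > -1 a real number, and p ≥ 0 an integer. Then ⟨(Σ_{j=1}^{N} λ_j^2)^p⟩^{fL} = ⟨(Σ_{j=1}^{N} λ_j^2)^p⟩^{L} / (N^2 + Na)_{2p}, where (u)_m := u(u+1)⋯(u+m-1) is the rising Pochhammer symbol. -/
open MeasureTheory Finset

noncomputable section

namespace Stmt10


def Amat (n : ℕ) : Matrix (Fin (n+1)) (Fin (n+1)) ℝ := fun i j =>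
  if i = Fin.last n then (if j = Fin.last n then 1 else -1) else (if i = j then 1 else 0)

def Bmap (n : ℕ) (y : Fin (n+1) → ℝ) : Fin (n+1) → ℝ :=
  fun i => if i = Fin.last n then y (Fin.last n) else y (Fin.last n) * y i

def Bmat (n : ℕ) (y : Fin (n+1) → ℝ) : Matrix (Fin (n+1)) (Fin (n+1)) ℝ := fun i j =>
  if i = Fin.last n then (if j = Fin.last n then 1 else 0)
  else (if j = i then y (Fin.last n) else 0) + (if j = Fin.last n then y i else 0)

def Phi (n : ℕ) (y : Fin (n+1) → ℝ) : Fin (n+1) → ℝ := (Amat n).mulVec (Bmap n y)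

lemma Phi_apply (n : ℕ) (y : Fin (n+1) → ℝ) (i : Fin (n+1)) :
    Phi n y i = y (Fin.last n) *
      (if i = Fin.last n then 1 - ∑ j : Fin n, y j.castSucc else y i) := by
  classical
  rcases eq_or_ne i (Fin.last n) with hi | hi
  · subst hi
    simp only [Phi, Matrix.mulVec, dotProduct, Amat, eq_self_iff_true, if_true]
    rw [Fin.sum_univ_castSucc]
    have h1 : ∀ j : Fin n, (if j.castSucc = Fin.last n then (1:ℝ) else -1) * Bmap n y j.castSucc
        = -(y (Fin.last n) * y j.castSucc) := fun j => by
      simp [Bmap, (Fin.castSucc_lt_last j).ne]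
    rw [Finset.sum_congr rfl fun j _ => h1 j]
    simp [Bmap, Finset.mul_sum, mul_sub]
    ring
  · simp only [Phi, Matrix.mulVec, dotProduct, Amat, if_neg hi]
    rw [Finset.sum_eq_single i]
    · simp [Bmap, hi]
    · intro b _ hb; simp [Ne.symm hb]
    · simp

lemma detAmat (n : ℕ) : (Amat n).det = 1 := by
  rw [Matrix.det_of_lowerTriangular]
  · simp [Amat]
  · intro i j hij
    have hij' : (i : Fin (n+1)) < j := hij
    have hi : i ≠ Fin.last n := by
      intro h; subst h; exact absurd hij' (Fin.le_last _).not_gt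
    simp [Amat, hi, hij'.ne]

lemma detBmat (n : ℕ) (y : Fin (n+1) → ℝ) : (Bmat n y).det = y (Fin.last n) ^ n := by
  rw [Matrix.det_of_upperTriangular]
  · rw [Fin.prod_univ_castSucc]
    have : ∀ j : Fin n, Bmat n y j.castSucc j.castSucc = y (Fin.last n) := fun j => by
      simp [Bmat, (Fin.castSucc_lt_last j).ne]
    rw [Finset.prod_congr rfl fun j _ => this j]
    simp [Bmat]
  · intro i j hij
    have hij' : (j : Fin (n+1)) < i := hij
    have hj : j ≠ Fin.last n := by
      intro h; subst h; exact absurd hij' (Fin.le_last _).not_gt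
    rcases eq_or_ne i (Fin.last n) with h | h
    · simp [Bmat, h, hj]
    · simp [Bmat, h, hj, hij'.ne]




def Aclm (n : ℕ) : (Fin (n+1) → ℝ) →L[ℝ] (Fin (n+1) → ℝ) :=
  LinearMap.toContinuousLinearMap (Matrix.toLin' (Amat n))

def Bclm (n : ℕ) (y : Fin (n+1) → ℝ) : (Fin (n+1) → ℝ) →L[ℝ] (Fin (n+1) → ℝ) :=
  LinearMap.toContinuousLinearMap (Matrix.toLin' (Bmat n y))

def Dphi (n : ℕ) (y : Fin (n+1) → ℝ) : (Fin (n+1) → ℝ) →L[ℝ] (Fin (n+1) → ℝ) :=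
  (Aclm n).comp (Bclm n y)

lemma hasFDerivAt_Bmap (n : ℕ) (y : Fin (n+1) → ℝ) :
    HasFDerivAt (Bmap n) (Bclm n y) y := by
  apply hasFDerivAt_pi''
  intro i
  rcases eq_or_ne i (Fin.last n) with hi | hi
  · subst hi
    simp only [Bmap, if_pos rfl]
    refine (hasFDerivAt_apply (Fin.last n) y).congr_fderiv ?_
    ext v
    simp only [ContinuousLinearMap.comp_apply, Bclm, LinearMap.coe_toContinuousLinearMap',
      Matrix.toLin'_apply, ContinuousLinearMap.proj_apply, Matrix.mulVec, dotProduct,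
      Bmat, eq_self_iff_true, if_true]
    rw [Finset.sum_eq_single (Fin.last n)] <;> simp +contextual [Ne.symm]
  · simp only [Bmap, if_neg hi]
    refine (HasFDerivAt.mul (hasFDerivAt_apply (Fin.last n) y)
      (hasFDerivAt_apply i y)).congr_fderiv ?_
    ext v
    simp only [ContinuousLinearMap.comp_apply, Bclm, LinearMap.coe_toContinuousLinearMap',
      Matrix.toLin'_apply, ContinuousLinearMap.proj_apply, Matrix.mulVec, dotProduct,
      Bmat, if_neg hi, ContinuousLinearMap.add_apply, ContinuousLinearMap.coe_smul',
      Pi.smul_apply, smul_eq_mul]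
    rw [Finset.sum_congr rfl (fun j _ => add_mul _ _ _), Finset.sum_add_distrib]
    rw [Finset.sum_eq_single i (by intro b _ hb; simp [hb]) (by simp),
      Finset.sum_eq_single (Fin.last n) (by intro b _ hb; simp [hb]) (by simp)]
    simp [mul_comm]

lemma hasFDerivAt_Phi (n : ℕ) (y : Fin (n+1) → ℝ) :
    HasFDerivAt (Phi n) (Dphi n y) y := by
  have h : Phi n = fun y => Aclm n (Bmap n y) := by
    funext z
    show Phi n z = Aclm n (Bmap n z)
    simp only [Aclm, LinearMap.coe_toContinuousLinearMap', Matrix.toLin'_apply]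
    rfl
  rw [h]
  exact ((Aclm n).hasFDerivAt (x := Bmap n y)).comp y (hasFDerivAt_Bmap n y)

lemma det_Dphi (n : ℕ) (y : Fin (n+1) → ℝ) :
    (Dphi n y).det = y (Fin.last n) ^ n := by
  have : (Dphi n y).det = LinearMap.det ((Matrix.toLin' (Amat n)).comp (Matrix.toLin' (Bmat n y))) := by
    rfl
  rw [this, LinearMap.det_comp, LinearMap.det_toLin', LinearMap.det_toLin', detAmat, detBmat,
    one_mul]




def domS (n : ℕ) : Set (Fin (n+1) → ℝ) :=
  {y | 0 < y (Fin.last n) ∧ (fun j : Fin n => y j.castSucc) ∈ simplexT n}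

lemma measurableSet_simplexT (m : ℕ) : MeasurableSet (simplexT m) := by
  have : simplexT m = (⋂ i, {x : Fin m → ℝ | 0 < x i}) ∩ {x | ∑ i, x i < 1} := by
    ext x; simp [simplexT, Set.mem_iInter]
  rw [this]
  exact (MeasurableSet.iInter fun i =>
      measurableSet_lt measurable_const (measurable_pi_apply i)).inter
    (measurableSet_lt (Finset.measurable_sum _ fun i _ => measurable_pi_apply i) measurable_const)

lemma measurableSet_domS (n : ℕ) : MeasurableSet (domS n) := by
  have : domS n = {y : Fin (n+1) → ℝ | 0 < y (Fin.last n)} ∩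
      ((fun y : Fin (n+1) → ℝ => fun j : Fin n => y j.castSucc) ⁻¹' simplexT n) := rfl
  rw [this]
  exact (measurableSet_lt measurable_const (measurable_pi_apply _)).inter
    ((measurable_pi_lambda _ fun j => measurable_pi_apply _) (measurableSet_simplexT n))

lemma sum_Phi (n : ℕ) (y : Fin (n+1) → ℝ) : ∑ i, Phi n y i = y (Fin.last n) := by
  simp only [Phi_apply]
  rw [Fin.sum_univ_castSucc]
  simp only [(Fin.castSucc_lt_last _).ne, if_false, eq_self_iff_true, if_true]
  rw [← Finset.mul_sum]
  ring

lemma injOn_Phi (n : ℕ) : Set.InjOn (Phi n) (domS n) := by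
  intro y hy z hz h
  have hsum : y (Fin.last n) = z (Fin.last n) := by
    rw [← sum_Phi n y, ← sum_Phi n z, h]
  have hr : y (Fin.last n) ≠ 0 := ne_of_gt hy.1
  funext i
  rcases eq_or_ne i (Fin.last n) with hi | hi
  · rw [hi]; exact hsum
  · have := congrFun h i
    rw [Phi_apply, Phi_apply, if_neg hi, if_neg hi, hsum] at this
    exact mul_left_cancel₀ (hsum ▸ hr) this

lemma mem_posOrth_iff {N : ℕ} (x : Fin N → ℝ) : x ∈ posOrth N ↔ ∀ i, 0 < x i := Iff.rfl

lemma image_Phi (n : ℕ) : Phi n '' domS n = posOrth (n+1) := by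
  apply Set.Subset.antisymm
  · rintro x ⟨y, hy, rfl⟩
    intro i
    rw [Phi_apply]
    rcases eq_or_ne i (Fin.last n) with hi | hi
    · rw [if_pos hi]
      exact mul_pos hy.1 (by linarith [hy.2.2])
    · rw [if_neg hi]
      have hlt : (i : ℕ) < n := Fin.lt_last_iff_ne_last.mpr hi
      have hcs : Fin.castSucc ⟨(i : ℕ), hlt⟩ = i := by ext; rfl
      rw [← hcs]
      exact mul_pos hy.1 (hy.2.1 ⟨i, hlt⟩)
  · intro x hx
    have hxpos : ∀ i, 0 < x i := hx
    set r : ℝ := ∑ i, x i with hr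
    have hrpos : 0 < r := Finset.sum_pos (fun i _ => hxpos i) ⟨Fin.last n, Finset.mem_univ _⟩
    refine ⟨fun i => if i = Fin.last n then r else x i / r, ⟨by simp [hrpos], ?_, ?_⟩, ?_⟩
    · intro j
      simp only [(Fin.castSucc_lt_last j).ne, if_false]
      exact div_pos (hxpos _) hrpos
    · simp only [(Fin.castSucc_lt_last _).ne, if_false]
      rw [← Finset.sum_div, div_lt_one hrpos, hr, Fin.sum_univ_castSucc]
      exact lt_add_of_pos_right _ (hxpos _)
    · funext i
      rw [Phi_apply]
      simp only [eq_self_iff_true, if_true]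
      rcases eq_or_ne i (Fin.last n) with hi | hi
      · subst hi
        simp only [eq_self_iff_true, if_true, (Fin.castSucc_lt_last _).ne, if_false]
        rw [← Finset.sum_div, mul_sub, mul_one, mul_div_cancel₀ _ (ne_of_gt hrpos)]
        rw [hr, Fin.sum_univ_castSucc]
        ring
      · simp only [if_neg hi]
        rw [mul_div_cancel₀ _ (ne_of_gt hrpos)]




lemma cov (n : ℕ) (g : (Fin (n+1) → ℝ) → ℝ) :
    ∫ x in posOrth (n+1), g x =
      ∫ y in domS n, |y (Fin.last n) ^ n| • g (Phi n y) := by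
  rw [← image_Phi n]
  rw [integral_image_eq_integral_abs_det_fderiv_smul volume (measurableSet_domS n)
    (fun y _ => (hasFDerivAt_Phi n y).hasFDerivWithinAt) (injOn_Phi n) g]
  simp_rw [det_Dphi]

lemma split (n : ℕ) (f : ℝ → ℝ) (h : (Fin n → ℝ) → ℝ) :
    ∫ y in domS n, f (y (Fin.last n)) * h (fun j => y j.castSucc) =
      (∫ r in Set.Ioi (0:ℝ), f r) * ∫ lam in simplexT n, h lam := by
  have hmp := volume_preserving_piFinSuccAbove (fun _ : Fin (n+1) => ℝ) (Fin.last n)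
  have hemb :=
    (MeasurableEquiv.piFinSuccAbove (fun _ : Fin (n+1) => ℝ) (Fin.last n)).measurableEmbedding
  have key := hmp.setIntegral_preimage_emb hemb
    (fun z : ℝ × (Fin n → ℝ) => f z.1 * h z.2) (Set.Ioi (0:ℝ) ×ˢ simplexT n)
  have hrm : ∀ y : Fin (n+1) → ℝ, (Fin.last n).removeNth y = fun j => y j.castSucc := by
    intro y; funext j; simp [Fin.removeNth, Fin.succAbove_last]
  have hpre : (MeasurableEquiv.piFinSuccAbove (fun _ : Fin (n+1) => ℝ) (Fin.last n)) ⁻¹'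
      (Set.Ioi (0:ℝ) ×ˢ simplexT n) = domS n := by
    ext y
    simp only [Set.mem_preimage, Set.mem_prod, MeasurableEquiv.piFinSuccAbove_apply,
      Set.mem_Ioi, Fin.insertNthEquiv, Equiv.coe_fn_symm_mk, hrm y]
    rfl
  rw [hpre] at key
  have happ : ∀ y : Fin (n+1) → ℝ,
      f ((MeasurableEquiv.piFinSuccAbove (fun _ : Fin (n+1) => ℝ) (Fin.last n)) y).1 *
        h ((MeasurableEquiv.piFinSuccAbove (fun _ : Fin (n+1) => ℝ) (Fin.last n)) y).2 =
      f (y (Fin.last n)) * h (fun j => y j.castSucc) := by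
    intro y
    simp only [MeasurableEquiv.piFinSuccAbove_apply, Fin.insertNthEquiv, Equiv.coe_fn_symm_mk,
      hrm y]
  rw [← (setIntegral_prod_mul f h (Set.Ioi (0:ℝ)) (simplexT n)), ← Measure.volume_eq_prod, ← key]
  exact setIntegral_congr_fun (measurableSet_domS n) (fun y _ => (happ y).symm)




def Kn (n : ℕ) : ℕ := ∑ j : Fin (n+1), (n - (j:ℕ))

lemma two_mul_Kn (n : ℕ) : 2 * Kn n = n * (n+1) := by
  have h1 : Kn n = ∑ j ∈ Finset.range (n+1), (n - j) := by
    rw [Kn, Fin.sum_univ_eq_sum_range]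
  have h2 : ∑ j ∈ Finset.range (n+1), (n - j) = ∑ j ∈ Finset.range (n+1), j := by
    have := Finset.sum_range_reflect (fun i => i) (n+1)
    simpa using this
  rw [h1, h2, mul_comm, Finset.sum_range_id_mul_two]
  simp [Nat.mul_comm]

lemma prod_ite_lt (n : ℕ) (t : ℝ) :
    (∏ j : Fin (n+1), ∏ k : Fin (n+1), if j < k then t else 1) = t ^ Kn n := by
  have h1 : ∀ j : Fin (n+1), (∏ k : Fin (n+1), if j < k then t else 1) = t ^ (n - (j:ℕ)) := by
    intro j
    rw [Finset.prod_ite, Finset.prod_const, Finset.prod_const_one, mul_one]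
    congr 1
    have : Finset.univ.filter (fun k => j < k) = Finset.Ioi j := by
      ext k; simp
    rw [this, Fin.card_Ioi]
    simp
  simp_rw [h1]
  rw [Finset.prod_pow_eq_pow_sum]
  rfl

lemma vand_scaled (n : ℕ) (r : ℝ) (μ : Fin (n+1) → ℝ) :
    (∏ j, ∏ k, if j < k then (r * μ k - r * μ j)^2 else 1) =
      (r^2) ^ Kn n * ∏ j, ∏ k, if j < k then (μ k - μ j)^2 else 1 := by
  have h : ∀ j k : Fin (n+1), (if j < k then (r * μ k - r * μ j)^2 else 1) =
      (if j < k then r^2 else 1) * (if j < k then (μ k - μ j)^2 else 1) := by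
    intro j k; split <;> ring
  simp_rw [h, Finset.prod_mul_distrib]
  rw [prod_ite_lt]

lemma flFull_castSucc (n : ℕ) (lam : Fin n → ℝ) (j : Fin n) :
    flFull (n+1) lam j.castSucc = lam j := by
  simp only [flFull]
  rw [dif_pos (show ((j.castSucc : ℕ)) < n+1-1 from j.isLt)]
  congr 1

lemma flFull_last (n : ℕ) (lam : Fin n → ℝ) :
    flFull (n+1) lam (Fin.last n) = 1 - ∑ j, lam j := by
  simp only [flFull]
  rw [dif_neg (by simp)]
  rfl

lemma sum_flFull (n : ℕ) (lam : Fin n → ℝ) : ∑ i, flFull (n+1) lam i = 1 := by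
  rw [Fin.sum_univ_castSucc, flFull_last]
  rw [Finset.sum_congr rfl fun j _ => flFull_castSucc n lam j]
  ring

lemma flFull_pos (n : ℕ) (lam : Fin n → ℝ) (h : lam ∈ simplexT n) :
    ∀ i, 0 < flFull (n+1) lam i := by
  intro i
  rcases eq_or_ne i (Fin.last n) with hi | hi
  · rw [hi, flFull_last]; linarith [h.2]
  · have hlt : (i : ℕ) < n := Fin.lt_last_iff_ne_last.mpr hi
    have hcs : Fin.castSucc ⟨(i : ℕ), hlt⟩ = i := by ext; rfl
    rw [← hcs, flFull_castSucc]
    exact h.1 _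

lemma Phi_eq_mul (n : ℕ) (y : Fin (n+1) → ℝ) (i : Fin (n+1)) :
    Phi n y i = y (Fin.last n) * flFull (n+1) (fun j => y j.castSucc) i := by
  rw [Phi_apply]
  rcases eq_or_ne i (Fin.last n) with hi | hi
  · rw [hi, if_pos rfl, flFull_last]
  · have hlt : (i : ℕ) < n := Fin.lt_last_iff_ne_last.mpr hi
    have hcs : Fin.castSucc ⟨(i : ℕ), hlt⟩ = i := by ext; rfl
    rw [if_neg hi, ← hcs, flFull_castSucc]




lemma integrand_eq (n : ℕ) (a : ℝ) (p : ℕ) (y : Fin (n+1) → ℝ) (hy : y ∈ domS n) :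
    |y (Fin.last n) ^ n| • ((∑ j, Phi n y j ^ 2) ^ p * lueW (n+1) a (Phi n y)) =
      (Real.exp (-y (Fin.last n)) *
          y (Fin.last n) ^ ((((n:ℝ)+1)^2 + ((n:ℝ)+1)*a + 2*(p:ℝ)) - 1)) *
        ((∑ j, flFull (n+1) (fun j => y j.castSucc) j ^ 2) ^ p *
          flV (n+1) a (flFull (n+1) (fun j => y j.castSucc))) := by
  set r := y (Fin.last n) with hrdef
  set μ := flFull (n+1) (fun j => y j.castSucc) with hμdef
  have hr : 0 < r := hy.1
  have hμpos : ∀ i, 0 < μ i := flFull_pos n _ hy.2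
  have hμsum : ∑ i, μ i = 1 := sum_flFull n _
  have hPhi : ∀ i, Phi n y i = r * μ i := Phi_eq_mul n y
  have c1 : (∑ j, Phi n y j ^ 2) = r^2 * ∑ j, μ j ^ 2 := by
    simp_rw [hPhi, mul_pow, ← Finset.mul_sum]
  have c2a : (∏ l, Phi n y l ^ a) = (r ^ a) ^ (n+1) * ∏ l, μ l ^ a := by
    simp_rw [hPhi]
    calc ∏ l, (r * μ l) ^ a = ∏ l, r ^ a * μ l ^ a :=
          Finset.prod_congr rfl fun l _ => Real.mul_rpow hr.le (hμpos l).le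
      _ = (r^a)^(n+1) * ∏ l, μ l ^ a := by
          rw [Finset.prod_mul_distrib, Finset.prod_const, Finset.card_univ, Fintype.card_fin]
  have c2b : (∏ l, Real.exp (-Phi n y l)) = Real.exp (-r) := by
    simp_rw [hPhi]
    rw [← Real.exp_sum]
    congr 1
    rw [Finset.sum_neg_distrib, ← Finset.mul_sum, hμsum, mul_one]
  have c3 : (∏ j, ∏ k, if j < k then (Phi n y k - Phi n y j)^2 else 1) =
      (r^2) ^ Kn n * ∏ j, ∏ k, if j < k then (μ k - μ j)^2 else 1 := by
    simp_rw [hPhi]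
    exact vand_scaled n r μ
  have habs : |r ^ n| = r ^ n := abs_of_pos (pow_pos hr n)
  rw [smul_eq_mul, habs, lueW, flV, c1, Finset.prod_mul_distrib, c2a, c2b, c3]
  have hKcast : (2 * Kn n : ℝ) = n * (n+1) := by exact_mod_cast congrArg Nat.cast (two_mul_Kn n)
  have hrpow : (r ^ n) * ((r^2) ^ p) * ((r ^ a) ^ (n+1)) * ((r^2) ^ Kn n) =
      r ^ ((((n:ℝ)+1)^2 + ((n:ℝ)+1)*a + 2*(p:ℝ)) - 1) := by
    rw [← Real.rpow_natCast r n, ← pow_mul, ← Real.rpow_natCast r (2*p),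
      ← Real.rpow_natCast (r ^ a) (n+1), ← Real.rpow_mul hr.le, ← pow_mul,
      ← Real.rpow_natCast r (2 * Kn n), ← Real.rpow_add hr, ← Real.rpow_add hr,
      ← Real.rpow_add hr]
    congr 1
    push_cast [hKcast]
    push_cast at hKcast
    linarith [hKcast]
  calc r ^ n * ((r ^ 2 * ∑ j, μ j ^ 2) ^ p *
        (((r ^ a) ^ (n + 1) * ∏ l, μ l ^ a) * Real.exp (-r) *
          ((r ^ 2) ^ Kn n * ∏ j, ∏ k, if j < k then (μ k - μ j) ^ 2 else 1)))
      = ((r ^ n) * ((r^2) ^ p) * ((r ^ a) ^ (n+1)) * ((r^2) ^ Kn n)) *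
        (Real.exp (-r) * ((∑ j, μ j ^ 2) ^ p *
          ((∏ l, μ l ^ a) * ∏ j, ∏ k, if j < k then (μ k - μ j) ^ 2 else 1))) := by
        rw [mul_pow]; ring
    _ = _ := by rw [hrpow]; ring




lemma Cpos (n : ℕ) (a : ℝ) (ha : -1 < a) (p : ℕ) :
    0 < ((n:ℝ)+1)^2 + ((n:ℝ)+1)*a + 2*(p:ℝ) := by
  have h1 : (0:ℝ) < (n:ℝ)+1 := by positivity
  have h2 : (0:ℝ) ≤ (p:ℝ) := Nat.cast_nonneg p
  nlinarith

lemma key (n : ℕ) (a : ℝ) (ha : -1 < a) (p : ℕ) :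
    ∫ x in posOrth (n+1), (∑ j, x j ^ 2) ^ p * lueW (n+1) a x =
      Real.Gamma (((n:ℝ)+1)^2 + ((n:ℝ)+1)*a + 2*(p:ℝ)) *
        ∫ lam in simplexT n,
          (∑ j, flFull (n+1) lam j ^ 2) ^ p * flV (n+1) a (flFull (n+1) lam) := by
  rw [cov n (fun x => (∑ j, x j ^ 2) ^ p * lueW (n+1) a x)]
  rw [setIntegral_congr_fun (measurableSet_domS n) (fun y hy => integrand_eq n a p y hy)]
  have hs := split n (fun t => Real.exp (-t) * t ^ ((((n:ℝ)+1)^2 + ((n:ℝ)+1)*a + 2*(p:ℝ)) - 1))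
    (fun lam => (∑ j, flFull (n+1) lam j ^ 2) ^ p * flV (n+1) a (flFull (n+1) lam))
  rw [← Real.Gamma_eq_integral (Cpos n a ha p)] at hs
  exact hs

lemma gamma_poch (u : ℝ) (hu : 0 < u) : ∀ m : ℕ,
    Real.Gamma (u + m) = Real.Gamma u * (ascPochhammer ℝ m).eval u
  | 0 => by simp
  | (m+1) => by
    have h : u + ((m+1 : ℕ) : ℝ) = (u + m) + 1 := by push_cast; ring
    have hne : u + (m : ℝ) ≠ 0 := by positivity
    rw [h, Real.Gamma_add_one hne, gamma_poch u hu m, ascPochhammer_succ_right]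
    simp only [Polynomial.eval_mul, Polynomial.eval_add, Polynomial.eval_X,
      Polynomial.eval_natCast]
    ring


end Stmt10

/-- The purity moments of the fixed-trace LUE equal those of the LUE
divided by the rising Pochhammer symbol `(N² + Na)_{2p}`. -/
theorem stmt10 (N : ℕ) (hN : 2 ≤ N) (a : ℝ) (ha : -1 < a) (p : ℕ) :
    flAvg N a (fun lam => (∑ j, lam j ^ 2) ^ p) =
      lueAvg N a (fun lam => (∑ j, lam j ^ 2) ^ p) /
        (ascPochhammer ℝ (2 * p)).eval ((N : ℝ) ^ 2 + N * a) := by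
  obtain ⟨n, rfl⟩ : ∃ n, N = n + 1 := ⟨N - 1, by omega⟩
  set C : ℝ := ((n:ℝ)+1)^2 + ((n:ℝ)+1)*a with hC
  have hCpos : 0 < C := by
    have h1 : (0:ℝ) < (n:ℝ)+1 := by positivity
    nlinarith
  have keyp := Stmt10.key n a ha p
  have key0 := Stmt10.key n a ha 0
  simp only [pow_zero, one_mul, Nat.cast_zero, mul_zero, add_zero] at key0
  have harg : ((n+1 : ℕ) : ℝ) ^ 2 + ((n+1 : ℕ) : ℝ) * a = C := by push_cast; ring
  have hΓ : Real.Gamma (C + ((2*p : ℕ) : ℝ)) =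
      Real.Gamma C * (ascPochhammer ℝ (2*p)).eval C := Stmt10.gamma_poch C hCpos (2*p)
  have hcast : C + ((2*p : ℕ) : ℝ) = ((n:ℝ)+1)^2 + ((n:ℝ)+1)*a + 2*(p:ℝ) := by
    push_cast; ring
  rw [hcast] at hΓ
  have hE : 0 < (ascPochhammer ℝ (2*p)).eval C := by
    have h1 := Real.Gamma_pos_of_pos hCpos
    have h2 := Real.Gamma_pos_of_pos (Stmt10.Cpos n a ha p)
    rw [hC] at *
    nlinarith [hΓ]
  rw [flAvg, lueAvg, harg]
  show (∫ lam in simplexT n,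
      (∑ j, flFull (n+1) lam j ^ 2) ^ p * flV (n+1) a (flFull (n+1) lam)) /
      (∫ lam in simplexT n, flV (n+1) a (flFull (n+1) lam)) = _
  rw [keyp, key0, hΓ]
  set A : ℝ := ∫ lam in simplexT n,
      (∑ j, flFull (n+1) lam j ^ 2) ^ p * flV (n+1) a (flFull (n+1) lam)
  set B : ℝ := ∫ lam in simplexT n, flV (n+1) a (flFull (n+1) lam)
  set E : ℝ := (ascPochhammer ℝ (2*p)).eval C
  rw [div_div]
  have h1 : Real.Gamma C * E * A = A * (Real.Gamma C * E) := by ring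
  have h2 : Real.Gamma C * B * E = B * (Real.Gamma C * E) := by ring
  rw [h1, h2]
  exact (mul_div_mul_right _ _ (by positivity : Real.Gamma C * E ≠ 0)).symm ▸ rfl

end
end

section
/- Let N ≥ 1 be an integer, a > -1 a real number, and κ_1 ≥ κ_2 ≥ ⋯ ≥ κ_N ≥ 0 integers. Then ∫_{(0,∞)^N} ∏_{l=1}^{N} x_l^a e^{-x_l} · det[x_j^{κ_i + N - i}]_{i,j=1}^{N} · det[x_j^{N - i}]_{i,j=1}^{N} dx = N! · ∏_{i=1}^{N} Γ(a + κ_i + N - i + 1) · ∏_{1 ≤ i < j ≤ N} (κ_i - κ_j + j - i). -/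
/-!
Expanding both determinants and integrating coordinate by coordinate (Andréief's identity) turns
the integral into `N! · det [Γ(a + m_i + r_k + 1)]`, with `m_i = κ_i + N - i` and `r_k = N - k`.
Writing `c_i = a + m_i + 1`, row `i` is `Γ(c_i)` times the rising factorials `(c_i)_{N-k}`, monic
polynomials of degrees `N - 1, …, 0` in `c_i`; so the determinant is `∏ Γ(c_i)` times the
Vandermonde determinant of the `c_i`, and `c_i - c_j = κ_i - κ_j + j - i`.
-/

open MeasureTheory Finset

noncomputable section

namespace Matrix

open Equiv

theorem sum_perm_perm_sign_mul_prod_eq_factorial_mul_det {ι R : Type*} [Fintype ι]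
    [DecidableEq ι] [CommRing R] (M : Matrix ι ι R) :
    ∑ σ : Perm ι, ∑ τ : Perm ι, ((Perm.sign σ : ℤ) * (Perm.sign τ : ℤ) : R) * ∏ j, M (σ j) (τ j) =
      (Fintype.card ι).factorial * M.det := by
  have row_sum (σ : Perm ι) :
      ∑ τ : Perm ι, ((Perm.sign σ : ℤ) * (Perm.sign τ : ℤ) : R) * ∏ j, M (σ j) (τ j) = M.det :=
    calc ∑ τ : Perm ι, ((Perm.sign σ : ℤ) * (Perm.sign τ : ℤ) : R) * ∏ j, M (σ j) (τ j)
        = (Perm.sign σ : ℤ) * ((M.submatrix σ id)ᵀ).det := by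
          rw [det_apply', Finset.mul_sum]
          simp only [transpose_apply, submatrix_apply, id, mul_assoc]
      _ = M.det := by
          rw [det_transpose, det_permute, ← mul_assoc, ← Int.cast_mul, ← Units.val_mul,
            Int.units_mul_self, Units.val_one, Int.cast_one, one_mul]
  rw [Finset.sum_congr rfl fun σ _ => row_sum σ, Finset.sum_const, Finset.card_univ,
    Fintype.card_perm, nsmul_eq_mul]

end Matrix

theorem Fin.prod_prod_Ioi_rev {M : Type*} [CommMonoid M] {n : ℕ} (f : Fin n → Fin n → M) :
    ∏ i : Fin n, ∏ j ∈ Ioi i, f j.rev i.rev = ∏ i, ∏ j ∈ Ioi i, f i j := by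
  simp only [← Finset.filter_lt_eq_Ioi, Finset.prod_filter]
  rw [Finset.prod_comm, ← Equiv.prod_comp Fin.revPerm]
  refine Fintype.prod_congr _ _ fun i => ?_
  rw [← Equiv.prod_comp Fin.revPerm]
  simp [Fin.rev_lt_rev]

open Equiv in
theorem MeasureTheory.integral_det_mul_det {ι α 𝕜 : Type*} [Fintype ι] [DecidableEq ι]
    [RCLike 𝕜] [MeasurableSpace α] (μ : Measure α) [SigmaFinite μ] (f g : ι → α → 𝕜)
    (hfg : ∀ i k, Integrable (fun x => f i x * g k x) μ) :
    ∫ x : ι → α, (Matrix.of fun i j => f i (x j)).det * (Matrix.of fun i j => g i (x j)).det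
        ∂(Measure.pi fun _ => μ) =
      (Fintype.card ι).factorial * (Matrix.of fun i k => ∫ x, f i x * g k x ∂μ).det := by
  have expand (x : ι → α) :
      (Matrix.of fun i j => f i (x j)).det * (Matrix.of fun i j => g i (x j)).det =
        ∑ σ : Perm ι, ∑ τ : Perm ι, ((Perm.sign σ : ℤ) * (Perm.sign τ : ℤ) : 𝕜) *
          ∏ j, f (σ j) (x j) * g (τ j) (x j) := by
    simp only [Matrix.det_apply', Matrix.of_apply, Finset.sum_mul_sum, Finset.prod_mul_distrib]
    exact Finset.sum_congr rfl fun σ _ => Finset.sum_congr rfl fun τ _ => by ring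
  have integrable (σ τ : Perm ι) :
      Integrable (fun x : ι → α => ∏ j, f (σ j) (x j) * g (τ j) (x j)) (Measure.pi fun _ => μ) :=
    Integrable.fintype_prod fun j => hfg (σ j) (τ j)
  simp_rw [expand]
  rw [integral_finsetSum _ fun σ _ => integrable_finsetSum _ fun τ _ =>
      (integrable σ τ).const_mul _,
    ← Matrix.sum_perm_perm_sign_mul_prod_eq_factorial_mul_det]
  refine Finset.sum_congr rfl fun σ _ => ?_
  rw [integral_finsetSum _ fun τ _ => (integrable σ τ).const_mul _]
  refine Finset.sum_congr rfl fun τ _ => ?_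
  rw [integral_const_mul, integral_fintype_prod_eq_prod (fun j x => f (σ j) x * g (τ j) x)]
  rfl

namespace Real

open Set

theorem rpow_mul_exp_neg_mul_pow_eqOn (a : ℝ) (n : ℕ) :
    EqOn (fun x : ℝ => x ^ a * exp (-x) * x ^ n) (fun x => exp (-x) * x ^ (a + n + 1 - 1))
      (Ioi 0) := fun x (hx : 0 < x) => by
  dsimp only
  rw [add_sub_cancel_right, rpow_add hx, rpow_natCast]
  ring

theorem integrableOn_rpow_mul_exp_neg_mul_pow {a : ℝ} (ha : -1 < a) (n : ℕ) :
    IntegrableOn (fun x : ℝ => x ^ a * exp (-x) * x ^ n) (Ioi 0) :=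
  (GammaIntegral_convergent (by linarith [n.cast_nonneg (α := ℝ)])).congr_fun
    (rpow_mul_exp_neg_mul_pow_eqOn a n).symm measurableSet_Ioi

theorem integral_rpow_mul_exp_neg_mul_pow {a : ℝ} (ha : -1 < a) (n : ℕ) :
    ∫ x in Ioi 0, x ^ a * exp (-x) * x ^ n = Gamma (a + n + 1) := by
  rw [setIntegral_congr_fun measurableSet_Ioi (rpow_mul_exp_neg_mul_pow_eqOn a n),
    Gamma_eq_integral (by linarith [n.cast_nonneg (α := ℝ)])]

theorem Gamma_add_nat_eq_mul_ascPochhammer {s : ℝ} (hs : ∀ k : ℕ, s ≠ -k) (n : ℕ) :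
    Gamma (s + n) = Gamma s * (ascPochhammer ℝ n).eval s := by
  induction n with
  | zero => simp
  | succ n ih =>
    have hsn : s + n ≠ 0 := fun h => hs n (by linarith)
    rw [Nat.cast_succ, ← add_assoc, Gamma_add_one hsn, ih, ascPochhammer_succ_eval]
    ring

end Real

theorem Matrix.det_ascPochhammer_eval_rev {R : Type*} [CommRing R] [IsDomain R] {n : ℕ}
    (v : Fin n → R) :
    (Matrix.of fun i k : Fin n => (ascPochhammer R (n - 1 - k)).eval (v i)).det =
      ∏ i : Fin n, ∏ j ∈ Ioi i, (v i - v j) := by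
  have reversed : (Matrix.of fun i k : Fin n => (ascPochhammer R (n - 1 - k)).eval (v i)) =
      (Matrix.of fun i k : Fin n => (ascPochhammer R k).eval (v i.rev)).submatrix
        Fin.revPerm Fin.revPerm := by
    ext i k
    simp only [of_apply, submatrix_apply, Fin.revPerm_apply, Fin.rev_rev, Fin.val_rev]
    congr 2
    omega
  rw [reversed, det_submatrix_equiv_self, ← det_eval_matrixOfPolynomials_eq_det_vandermonde _ _
    (fun k => ascPochhammer_natDegree R k) (fun k => monic_ascPochhammer R k), det_vandermonde]
  exact Fin.prod_prod_Ioi_rev fun i j => v i - v j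

theorem Matrix.det_Gamma_add_nat_rev {n : ℕ} (c : Fin n → ℝ) (hc : ∀ i (k : ℕ), c i ≠ -k) :
    (Matrix.of fun i k : Fin n => Real.Gamma (c i + (n - 1 - k : ℕ))).det =
      (∏ i, Real.Gamma (c i)) * ∏ i : Fin n, ∏ j ∈ Ioi i, (c i - c j) := by
  simp_rw [Real.Gamma_add_nat_eq_mul_ascPochhammer (hc _)]
  exact (det_mul_column _ (of fun i k : Fin n => (ascPochhammer ℝ (n - 1 - k)).eval (c i))).trans
    (congrArg _ (det_ascPochhammer_eval_rev c))

theorem posOrth_eq_pi (N : ℕ) : posOrth N = Set.univ.pi fun _ => Set.Ioi 0 := by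
  ext x
  simp [posOrth]

theorem setIntegral_posOrth_laguerre_mul_det_mul_det (N : ℕ) {a : ℝ} (ha : -1 < a)
    (m r : Fin N → ℕ) :
    ∫ x in posOrth N, (∏ l, x l ^ a * Real.exp (-x l)) *
        (Matrix.of fun i j : Fin N => x j ^ m i).det *
          (Matrix.of fun i j : Fin N => x j ^ r i).det =
      N.factorial * (Matrix.of fun i k => Real.Gamma (a + (m i + r k : ℕ) + 1)).det := by
  have weight_into_rows (x : Fin N → ℝ) :
      (∏ l, x l ^ a * Real.exp (-x l)) * (Matrix.of fun i j : Fin N => x j ^ m i).det =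
        (Matrix.of fun i j => x j ^ a * Real.exp (-x j) * x j ^ m i).det :=
    (Matrix.det_mul_row _ _).symm
  have moment (i k : Fin N) (x : ℝ) :
      x ^ a * Real.exp (-x) * x ^ m i * x ^ r k = x ^ a * Real.exp (-x) * x ^ (m i + r k) := by
    rw [mul_assoc _ (x ^ m i), ← pow_add]
  simp_rw [weight_into_rows]
  rw [posOrth_eq_pi, volume_pi, Measure.restrict_pi_pi,
    integral_det_mul_det _ (fun i x => x ^ a * Real.exp (-x) * x ^ m i) (fun i x => x ^ r i)
      fun i k => by simp only [moment]; exact Real.integrableOn_rpow_mul_exp_neg_mul_pow ha _,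
    Fintype.card_fin]
  simp_rw [moment, Real.integral_rpow_mul_exp_neg_mul_pow ha]

theorem stmt13_general (N : ℕ) (a : ℝ) (ha : -1 < a) (κ : Fin N → ℕ) :
    (∫ x in posOrth N,
        (∏ l, x l ^ a * Real.exp (-x l)) *
          Matrix.det (Matrix.of fun i j : Fin N => x j ^ (κ i + (N - 1 - (i : ℕ)))) *
          Matrix.det (Matrix.of fun i j : Fin N => x j ^ (N - 1 - (i : ℕ)))) =
      (N.factorial : ℝ) *
        (∏ i : Fin N, Real.Gamma (a + κ i + ((N - 1 - (i : ℕ) : ℕ) : ℝ) + 1)) *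
        ∏ i : Fin N, ∏ j : Fin N, if i < j then
          ((κ i : ℝ) - κ j + (j : ℕ) - (i : ℕ)) else 1 := by
  set c : Fin N → ℝ := fun i => a + κ i + ((N - 1 - i : ℕ) : ℝ) + 1
  have hc (i : Fin N) (k : ℕ) : c i ≠ -k := by
    simp only [c]
    linarith [(κ i).cast_nonneg (α := ℝ), (N - 1 - i).cast_nonneg (α := ℝ), k.cast_nonneg (α := ℝ)]
  have hrev (i : Fin N) : ((N - 1 - i : ℕ) : ℝ) = N - 1 - i := by
    have := i.isLt
    rw [Nat.cast_sub (by omega), Nat.cast_sub (by omega), Nat.cast_one]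
  have shifted : (Matrix.of fun i k : Fin N =>
        Real.Gamma (a + (κ i + (N - 1 - i) + (N - 1 - k) : ℕ) + 1)) =
      Matrix.of fun i k : Fin N => Real.Gamma (c i + (N - 1 - k : ℕ)) := by
    ext i k
    simp only [Matrix.of_apply, c]
    congr 1
    push_cast
    ring
  rw [setIntegral_posOrth_laguerre_mul_det_mul_det N ha, shifted,
    Matrix.det_Gamma_add_nat_rev c hc, mul_assoc]
  simp only [Finset.prod_ite, Finset.filter_lt_eq_Ioi, Finset.prod_const_one, mul_one]
  congr 2
  refine Finset.prod_congr rfl fun i _ => Finset.prod_congr rfl fun j _ => ?_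
  simp only [c]
  push_cast [hrev]
  ring

/-- The Laguerre integral of the product of the two alternants
`det[x_j^{κ_i + N - i}]` and `det[x_j^{N - i}]` (with `i, j` running over `Fin N`,
1-based value `i+1`, so `N - i` reads `N - 1 - ↑i`). -/
theorem stmt13 (N : ℕ) (hN : 1 ≤ N) (a : ℝ) (ha : -1 < a) (κ : Fin N → ℕ)
    (hκ : ∀ i j : Fin N, i ≤ j → κ j ≤ κ i) :
    (∫ x in posOrth N,
        (∏ l, x l ^ a * Real.exp (-x l)) *
          Matrix.det (Matrix.of fun i j : Fin N => x j ^ (κ i + (N - 1 - (i : ℕ)))) *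
          Matrix.det (Matrix.of fun i j : Fin N => x j ^ (N - 1 - (i : ℕ)))) =
      (N.factorial : ℝ) *
        (∏ i : Fin N, Real.Gamma (a + κ i + ((N - 1 - (i : ℕ) : ℕ) : ℝ) + 1)) *
        ∏ i : Fin N, ∏ j : Fin N, if i < j then
          ((κ i : ℝ) - κ j + (j : ℕ) - (i : ℕ)) else 1 :=
  stmt13_general N a ha κ

end
end
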